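/- For every α ≥ 2, the vector (2, 2, ..., 2) of length α (all entries 2) is uniquely 0-realized by the path P_{2α}: P_{2α} is a tp0 cop-win graph with this rank cardinality vector, and every tp0 cop-win graph with this rank cardinality vector is isomorphic to P_{2α}. -/

import Mathlib

/-!
Removing the strict corners of `P_N` peels off its two end vertices, so the rank classes of
`P_{2α}` are the pairs of vertices at equal distance from the ends, and the top class is the
middle edge, which dominates nothing of the previous stage.

Conversely, suppose every rank class of `G` has two vertices, and rebuild `G` from the top
down. The top class is an edge, and `G^(k)` is the path `G^(k+1)` together with the two strict
corners `c`, `d` of `G^(k)`, while no path vertex is a strict corner. If the path has at least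
three vertices, each of its ends must be kept from being cornered by its neighbour by one of
`c`, `d`; two-sided protection by the same vertex is impossible, and the vertex cornering a
protector can only be the end it protects. Hence `c` and `d` hang at opposite ends. If the path
is the top edge, tp0 says that no top vertex sees both `c` and `d`, which again forces them to
hang at opposite ends.
-/

namespace CopsRobbers

variable {V : Type*}

/-- The closed neighborhood of `v` within the vertex set `S` (graphs are reflexive,
so `v` itself belongs to its closed neighborhood). -/
def closedNbhd (G : SimpleGraph V) (S : Set V) (v : V) : Set V :=
  {u | u ∈ S ∧ (u = v ∨ G.Adj u v)}

/-- `v` is a strict corner of the subgraph induced on `S`: some other vertex `w ∈ S`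
strictly corners `v`, i.e. `N[v] ⊊ N[w]` within `S`. -/
def StrictCorner (G : SimpleGraph V) (S : Set V) (v : V) : Prop :=
  v ∈ S ∧ ∃ w ∈ S, w ≠ v ∧ closedNbhd G S v ⊂ closedNbhd G S w

/-- The remaining vertex sets of the corner ranking procedure (0-indexed auxiliary
version): at each step all current strict corners are removed. -/
def stageAux (G : SimpleGraph V) : ℕ → Set V
  | 0 => Set.univ
  | n + 1 => stageAux G n \ {v | StrictCorner G (stageAux G n) v}

/-- `stage G k` is the vertex set of `G^(k)` (for `k ≥ 1`), so `stage G 1 = V(G)`. -/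
def stage (G : SimpleGraph V) (k : ℕ) : Set V := stageAux G (k - 1)

/-- The corner rank of a vertex: the least `k ≥ 1` such that `v` is a strict corner
of `G^(k)`, or `G^(k)` is a clique still containing `v`; and `⊤` (that is, `∞`) if
there is no such `k`. -/
noncomputable def cornerRank (G : SimpleGraph V) (v : V) : ℕ∞ :=
  sInf {k : ℕ∞ | ∃ n : ℕ, k = (n : ℕ∞) ∧ 1 ≤ n ∧
    (StrictCorner G (stage G n) v ∨ (G.IsClique (stage G n) ∧ v ∈ stage G n))}

/-- The corner rank of a graph: the largest corner rank of a vertex. -/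
noncomputable def graphRank (G : SimpleGraph V) : ℕ∞ := ⨆ v, cornerRank G v

/-- A graph is cop-win iff every vertex has finite corner rank. -/
def CopWin (G : SimpleGraph V) : Prop := ∀ v, cornerRank G v ≠ ⊤

/-- `v` dominates the set `S`: `v` is (reflexively) adjacent to every vertex of `S`. -/
def Dominates (G : SimpleGraph V) (v : V) (S : Set V) : Prop :=
  ∀ u ∈ S, u = v ∨ G.Adj v u

/-- A cop-win graph of corner rank `α ≥ 2` is `tp1` if some vertex of corner rank `α`
dominates the vertex set of `G^(α-1)`. -/
def Tp1 (G : SimpleGraph V) : Prop :=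
  ∃ α : ℕ, 2 ≤ α ∧ graphRank G = (α : ℕ∞) ∧
    ∃ v, cornerRank G v = (α : ℕ∞) ∧ Dominates G v (stage G (α - 1))

/-- `G` realizes the vector `(x_α, …, x_1)` (written as the list `[x_α, …, x_1]`):
`G` is cop-win of corner rank `α` and for each `k`, `x_k` is the number of vertices
of corner rank `k`. -/
def Realizes (G : SimpleGraph V) (x : List ℕ) : Prop :=
  CopWin G ∧ graphRank G = (x.length : ℕ∞) ∧
  ∀ i : Fin x.length,
    x.get i = {v | cornerRank G v = ((x.length - (i : ℕ) : ℕ) : ℕ∞)}.ncard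

/-- `G` r-realizes `x` (for `r ∈ {0,1}`): `G` realizes `x` and `G` is tp-r. -/
def RRealizes (G : SimpleGraph V) (r : ℕ) (x : List ℕ) : Prop :=
  Realizes G x ∧ (Tp1 G ↔ r = 1)

/-- A vector is realizable if it is the rank cardinality vector of some finite cop-win graph. -/
def Realizable (x : List ℕ) : Prop :=
  ∃ (W : Type) (_ : Fintype W) (G : SimpleGraph W), Realizes G x

/-- A vector is r-realizable if some finite tp-r cop-win graph realizes it. -/
def RRealizable (r : ℕ) (x : List ℕ) : Prop :=
  ∃ (W : Type) (_ : Fintype W) (G : SimpleGraph W), RRealizes G r x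

open Classical in
/-- The capture time of a cop-win graph: `cr(G) - r(G)`. -/
noncomputable def captureTime (G : SimpleGraph V) : ℕ :=
  (graphRank G).toNat - (if Tp1 G then 1 else 0)

end CopsRobbers

namespace CopsRobbers

variable {V : Type*} {G : SimpleGraph V}

section ClosedNbhd

variable {S : Set V} {v w x z : V}

theorem mem_closedNbhd : x ∈ closedNbhd G S v ↔ x ∈ S ∧ (x = v ∨ G.Adj x v) := Iff.rfl

theorem self_mem_closedNbhd (hv : v ∈ S) : v ∈ closedNbhd G S v := ⟨hv, Or.inl rfl⟩

theorem mem_closedNbhd_of_adj (hx : x ∈ S) (h : G.Adj x v) : x ∈ closedNbhd G S v :=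
  ⟨hx, Or.inr h⟩

theorem adj_of_mem_closedNbhd (h : x ∈ closedNbhd G S v) (hne : x ≠ v) : G.Adj x v :=
  h.2.resolve_left hne

theorem adj_of_closedNbhd_subset (hsub : closedNbhd G S x ⊆ closedNbhd G S w) (hz : z ∈ S)
    (hzw : z ≠ w) (h : G.Adj x z) : G.Adj w z :=
  (adj_of_mem_closedNbhd (hsub (mem_closedNbhd_of_adj hz h.symm)) hzw).symm

theorem strictCorner_of_subset (hv : v ∈ S) (hw : w ∈ S)
    (hsub : closedNbhd G S v ⊆ closedNbhd G S w) (hzw : z ∈ closedNbhd G S w)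
    (hzv : z ∉ closedNbhd G S v) : StrictCorner G S v :=
  ⟨hv, w, hw, fun h => hzv (h ▸ hzw), hsub, fun h => hzv (h hzw)⟩

theorem not_strictCorner_pair {a b : V} : ¬ StrictCorner G {a, b} v := by
  rintro ⟨hv, w, hw, hwv, hsub, hnsup⟩
  have hvw : G.Adj v w := adj_of_mem_closedNbhd (hsub (self_mem_closedNbhd hv)) hwv.symm
  refine hnsup fun x hx => ?_
  have : x = v ∨ x = w := by
    have hxS := hx.1
    simp only [Set.mem_insert_iff, Set.mem_singleton_iff] at hv hw hxS
    rcases hv with rfl | rfl <;> rcases hw with rfl | rfl <;> tauto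
  rcases this with rfl | rfl
  · exact self_mem_closedNbhd hv
  · exact mem_closedNbhd_of_adj hw hvw.symm

end ClosedNbhd

section CornerRank

/-- Stage `n` would assign rank `n` to `v`. This can hold for several `n`; the corner rank is
the least one. -/
def RankedAt (G : SimpleGraph V) (n : ℕ) (v : V) : Prop :=
  StrictCorner G (stage G n) v ∨ (G.IsClique (stage G n) ∧ v ∈ stage G n)

variable {k n : ℕ} {v : V}

theorem cornerRank_eq_sInf (v : V) :
    cornerRank G v = sInf {k : ℕ∞ | ∃ n : ℕ, k = n ∧ 1 ≤ n ∧ RankedAt G n v} := rfl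

theorem one_le_cornerRank (v : V) : 1 ≤ cornerRank G v :=
  le_sInf <| by rintro _ ⟨n, rfl, hn, -⟩; exact_mod_cast hn

theorem cornerRank_le (hn : 1 ≤ n) (h : RankedAt G n v) : cornerRank G v ≤ n :=
  sInf_le ⟨n, rfl, hn, h⟩

theorem le_cornerRank (h : ∀ n, 1 ≤ n → n < k → ¬ RankedAt G n v) :
    (k : ℕ∞) ≤ cornerRank G v :=
  le_sInf <| by
    rintro _ ⟨n, rfl, hn, hr⟩
    exact_mod_cast not_lt.1 fun hnk => h n hn hnk hr

theorem rankedAt_of_cornerRank_eq (h : cornerRank G v = k) : RankedAt G k v := by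
  have hne : {k : ℕ∞ | ∃ n : ℕ, k = n ∧ 1 ≤ n ∧ RankedAt G n v}.Nonempty := by
    by_contra hem
    rw [Set.not_nonempty_iff_eq_empty] at hem
    rw [cornerRank_eq_sInf, hem, sInf_empty] at h
    exact ENat.top_ne_natCast k h
  obtain ⟨n, hn, -, hr⟩ := csInf_mem hne
  rw [← cornerRank_eq_sInf, h, ENat.natCast_inj] at hn
  exact hn ▸ hr

theorem stage_one : stage G 1 = Set.univ := rfl

theorem stage_succ (hk : 1 ≤ k) :
    stage G (k + 1) = stage G k \ {v | StrictCorner G (stage G k) v} := by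
  obtain ⟨k, rfl⟩ := Nat.exists_eq_add_of_le' hk
  rfl

theorem strictCorner_stage_iff_of_stage_eq (hk : 1 ≤ k)
    (hst : stage G k = {v | (k : ℕ∞) ≤ cornerRank G v}) {v₀ : V}
    (hv₀ : (k : ℕ∞) < cornerRank G v₀) (v : V) :
    StrictCorner G (stage G k) v ↔ cornerRank G v = k := by
  refine ⟨fun hv => le_antisymm (cornerRank_le hk (Or.inl hv)) ?_, fun hv => ?_⟩
  · have := hv.1
    rwa [hst] at this
  · -- the stage is not a clique, since it contains `v₀`, whose rank exceeds `k`
    refine (rankedAt_of_cornerRank_eq hv).resolve_right fun ⟨hcl, _⟩ => ?_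
    have hv₀s : v₀ ∈ stage G k := by rw [hst]; exact hv₀.le
    exact (cornerRank_le hk (Or.inr ⟨hcl, hv₀s⟩)).not_gt hv₀

theorem stage_eq_setOf_le (hk : 1 ≤ k) {v₀ : V} (hv₀ : (k : ℕ∞) ≤ cornerRank G v₀) :
    stage G k = {v | (k : ℕ∞) ≤ cornerRank G v} := by
  induction k, hk using Nat.le_induction with
  | base => ext v; simp [stage_one, one_le_cornerRank]
  | succ k hk ih =>
    have hlt : (k : ℕ∞) < cornerRank G v₀ :=
      (ENat.add_one_le_iff (ENat.natCast_ne_top k)).1 (by exact_mod_cast hv₀)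
    have hst := ih hlt.le
    ext v
    rw [stage_succ hk, Set.mem_sdiff, Set.mem_ofPred_eq,
      strictCorner_stage_iff_of_stage_eq hk hst hlt, hst, Set.mem_ofPred_eq, Set.mem_ofPred_eq,
      Nat.cast_succ, ENat.add_one_le_iff (ENat.natCast_ne_top k), lt_iff_le_and_ne, ne_comm]

theorem strictCorner_stage_iff (hk : 1 ≤ k) {v₀ : V} (hv₀ : (k : ℕ∞) < cornerRank G v₀)
    (v : V) : StrictCorner G (stage G k) v ↔ cornerRank G v = k :=
  strictCorner_stage_iff_of_stage_eq hk (stage_eq_setOf_le hk hv₀.le) hv₀ v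

theorem adj_of_stage_eq_pair {a b : V} (hab : a ≠ b) (hst : stage G k = {a, b})
    (ha : cornerRank G a = k) : G.Adj a b := by
  rcases rankedAt_of_cornerRank_eq ha with hc | ⟨hcl, -⟩
  · rw [hst] at hc
    exact (not_strictCorner_pair hc).elim
  · rw [hst] at hcl
    exact hcl (Set.mem_insert a _) (Set.mem_insert_of_mem a rfl) hab

end CornerRank

section Realization

theorem realizes_replicate_iff {α c : ℕ} :
    Realizes G (List.replicate α c) ↔ CopWin G ∧ graphRank G = α ∧
      ∀ k, 1 ≤ k → k ≤ α → {v | cornerRank G v = k}.ncard = c := by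
  simp only [Realizes, List.length_replicate, List.get_eq_getElem, List.getElem_replicate]
  refine and_congr_right fun _ => and_congr_right fun _ =>
    ⟨fun h k hk hkα => ?_, fun h i => ?_⟩
  · have := h ⟨α - k, by rw [List.length_replicate]; omega⟩
    simp only [Nat.sub_sub_self hkα] at this
    exact this.symm
  · have hi := i.isLt
    simp only [List.length_replicate] at hi ⊢
    exact (h (α - i) (by omega) (by omega)).symm

theorem rRealizes_zero_iff {x : List ℕ} : RRealizes G 0 x ↔ Realizes G x ∧ ¬ Tp1 G := by
  simp [RRealizes]

theorem tp1_iff {α : ℕ} (hα : 2 ≤ α) (h : graphRank G = α) :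
    Tp1 G ↔ ∃ v, cornerRank G v = α ∧ Dominates G v (stage G (α - 1)) := by
  refine ⟨fun ⟨β, _, hβ, hv⟩ => ?_, fun hv => ⟨α, hα, h, hv⟩⟩
  rw [h, ENat.natCast_inj] at hβ
  exact hβ ▸ hv

end Realization

section PathGraph

open SimpleGraph

variable {N k : ℕ}

/-- The vertices of `P_N` at distance at least `k` from both ends. -/
def pathSeg (N k : ℕ) : Set (Fin N) := {i | k ≤ i.val ∧ i.val + k < N}

theorem mem_pathSeg {i : Fin N} : i ∈ pathSeg N k ↔ k ≤ i.val ∧ i.val + k < N := Iff.rfl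

theorem mem_closedNbhd_pathGraph {S : Set (Fin N)} {i j : Fin N} :
    i ∈ closedNbhd (pathGraph N) S j ↔
      i ∈ S ∧ (i.val = j.val ∨ i.val + 1 = j.val ∨ j.val + 1 = i.val) := by
  rw [mem_closedNbhd, pathGraph_adj, Fin.ext_iff]

theorem strictCorner_pathSeg_iff (hk : 2 * k + 3 ≤ N) (i : Fin N) :
    StrictCorner (pathGraph N) (pathSeg N k) i ↔ i.val = k ∨ i.val + k + 1 = N := by
  constructor
  · rintro ⟨hi, w, -, hwi, hsub, -⟩
    rw [mem_pathSeg] at hi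
    by_contra hend
    have hprev : (⟨i - 1, by omega⟩ : Fin N) ∈ closedNbhd (pathGraph N) (pathSeg N k) w :=
      hsub (by simp only [mem_closedNbhd_pathGraph, mem_pathSeg]; omega)
    have hnext : (⟨i + 1, by omega⟩ : Fin N) ∈ closedNbhd (pathGraph N) (pathSeg N k) w :=
      hsub (by simp only [mem_closedNbhd_pathGraph, mem_pathSeg, or_true, and_true]; omega)
    simp only [mem_closedNbhd_pathGraph] at hprev hnext
    exact hwi (Fin.ext (by omega))
  · rintro (hi | hi)
    · refine strictCorner_of_subset (w := ⟨k + 1, by omega⟩) (z := ⟨k + 2, by omega⟩)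
        ?_ ?_ (fun x hx => ?_) ?_ ?_
      all_goals simp only [mem_closedNbhd_pathGraph, mem_pathSeg, or_true, and_true] at *
      all_goals omega
    · refine strictCorner_of_subset (w := ⟨N - k - 2, by omega⟩)
        (z := ⟨N - k - 3, by omega⟩) ?_ ?_ (fun x hx => ?_) ?_ ?_
      all_goals simp only [mem_closedNbhd_pathGraph, mem_pathSeg] at *
      all_goals omega

theorem isClique_pathSeg (hk : N ≤ 2 * k + 2) : (pathGraph N).IsClique (pathSeg N k) := by
  intro i hi j hj hij
  rw [mem_pathSeg] at hi hj
  rw [pathGraph_adj]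
  have := Fin.val_ne_of_ne hij
  omega

theorem not_isClique_pathSeg (hk : 2 * k + 3 ≤ N) : ¬ (pathGraph N).IsClique (pathSeg N k) := by
  intro h
  have := h (x := ⟨k, by omega⟩) (y := ⟨N - k - 1, by omega⟩)
  simp only [mem_pathSeg, pathGraph_adj, ne_eq, Fin.ext_iff] at this
  omega

theorem stage_pathGraph (hk : 2 * k < N) : stage (pathGraph N) (k + 1) = pathSeg N k := by
  induction k with
  | zero => ext i; simp [stage_one, mem_pathSeg]
  | succ k ih =>
    ext i
    rw [stage_succ (by omega), ih (by omega), Set.mem_sdiff, Set.mem_ofPred_eq,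
      strictCorner_pathSeg_iff (by omega), mem_pathSeg, mem_pathSeg]
    omega

theorem cornerRank_pathGraph (i : Fin N) :
    cornerRank (pathGraph N) i = (min (i.val + 1) (N - i.val) : ℕ) := by
  set r := min (i.val + 1) (N - i.val)
  have hst : ∀ l, 1 ≤ l → l ≤ r → stage (pathGraph N) l = pathSeg N (l - 1) := by
    intro l hl hlr
    obtain ⟨l, rfl⟩ := Nat.exists_eq_add_of_le' hl
    exact stage_pathGraph (by omega)
  refine le_antisymm (cornerRank_le (by omega) ?_) (le_cornerRank fun l hl hlr hrank => ?_)
  · rw [RankedAt, hst r (by omega) le_rfl]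
    by_cases hend : 2 * (r - 1) + 3 ≤ N
    · exact Or.inl ((strictCorner_pathSeg_iff hend i).2 (by omega))
    · exact Or.inr ⟨isClique_pathSeg (by omega), mem_pathSeg.2 (by omega)⟩
  · rw [RankedAt, hst l hl hlr.le, strictCorner_pathSeg_iff (by omega)] at hrank
    rcases hrank with hend | ⟨hcl, -⟩
    · omega
    · exact not_isClique_pathSeg (by omega) hcl

variable {m : ℕ}

theorem graphRank_pathGraph : graphRank (pathGraph (2 * m)) = m := by
  refine le_antisymm (iSup_le fun i => ?_) ?_
  · rw [cornerRank_pathGraph]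
    exact_mod_cast (by omega : min (i.val + 1) (2 * m - i.val) ≤ m)
  · rcases Nat.eq_zero_or_pos m with rfl | hm
    · exact bot_le
    · refine le_iSup_of_le (⟨m - 1, by omega⟩ : Fin (2 * m)) ?_
      rw [cornerRank_pathGraph]
      exact_mod_cast (by omega : m ≤ min (m - 1 + 1) (2 * m - (m - 1)))

theorem ncard_cornerRank_pathGraph (hk : 1 ≤ k) (hkm : k ≤ m) :
    {i | cornerRank (pathGraph (2 * m)) i = k}.ncard = 2 := by
  have : {i | cornerRank (pathGraph (2 * m)) i = k} =
      {⟨k - 1, by omega⟩, ⟨2 * m - k, by omega⟩} := by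
    ext i
    simp only [Set.mem_ofPred_eq, Set.mem_insert_iff, Set.mem_singleton_iff, Fin.ext_iff,
      cornerRank_pathGraph, Nat.cast_inj]
    omega
  rw [this, Set.ncard_pair (by rw [Ne, Fin.mk.injEq]; omega)]

theorem not_tp1_pathGraph (hm : 2 ≤ m) : ¬ Tp1 (pathGraph (2 * m)) := by
  rw [tp1_iff hm graphRank_pathGraph]
  rintro ⟨i, hi, hdom⟩
  rw [cornerRank_pathGraph, Nat.cast_inj] at hi
  rw [show m - 1 = m - 2 + 1 by omega, stage_pathGraph (by omega)] at hdom
  have hright := hdom ⟨m + 1, by omega⟩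
  have hleft := hdom ⟨m - 2, by omega⟩
  simp only [mem_pathSeg, pathGraph_adj, Fin.ext_iff] at hright hleft
  omega

theorem rRealizes_pathGraph (hm : 2 ≤ m) :
    RRealizes (pathGraph (2 * m)) 0 (List.replicate m 2) := by
  refine rRealizes_zero_iff.2 ⟨realizes_replicate_iff.2 ⟨fun i => ?_, graphRank_pathGraph,
    fun k hk hkm => ncard_cornerRank_pathGraph hk hkm⟩, not_tp1_pathGraph hm⟩
  rw [cornerRank_pathGraph]
  exact ENat.natCast_ne_top _

end PathGraph

section PathLabeling

/-- `u 0, …, u (n - 1)` list `S` without repetition along an induced path of `G`; the values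
of `u` from `n` on are irrelevant. -/
structure IsPathLabeling (G : SimpleGraph V) (S : Set V) (n : ℕ) (u : ℕ → V) : Prop where
  bijOn : Set.BijOn u (Set.Iio n) S
  adj_iff : ∀ i < n, ∀ j < n, G.Adj (u i) (u j) ↔ i + 1 = j ∨ j + 1 = i

variable {S T : Set V} {n : ℕ} {u : ℕ → V}

namespace IsPathLabeling

theorem mem (hu : IsPathLabeling G S n u) {i : ℕ} (hi : i < n) : u i ∈ S := hu.bijOn.mapsTo hi

theorem eq_iff (hu : IsPathLabeling G S n u) {i j : ℕ} (hi : i < n) (hj : j < n) :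
    u i = u j ↔ i = j :=
  hu.bijOn.injOn.eq_iff hi hj

theorem exists_eq (hu : IsPathLabeling G S n u) {z : V} (hz : z ∈ S) : ∃ i < n, u i = z :=
  hu.bijOn.surjOn hz

theorem reverse (hu : IsPathLabeling G S n u) :
    IsPathLabeling G S n (fun i => u (n - 1 - i)) where
  bijOn := hu.bijOn.comp (f := fun i => n - 1 - i)
    ⟨fun i hi => by simp only [Set.mem_Iio] at hi ⊢; omega,
      fun i hi j hj hij => by simp only [Set.mem_Iio] at hi hj hij; omega,
      fun i hi => ⟨n - 1 - i, by simp only [Set.mem_Iio] at hi ⊢; omega, by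
        simp only [Set.mem_Iio] at hi; dsimp only; omega⟩⟩
  adj_iff i hi j hj := by rw [hu.adj_iff _ (by omega) _ (by omega)]; omega

theorem nonempty_iso (hu : IsPathLabeling G Set.univ n u) :
    Nonempty (G ≃g SimpleGraph.pathGraph n) := by
  have hbij : Function.Bijective fun i : Fin n => u i :=
    ⟨fun i j hij => Fin.ext ((hu.eq_iff i.isLt j.isLt).1 hij), fun z => by
      obtain ⟨i, hi, rfl⟩ := hu.exists_eq (Set.mem_univ z)
      exact ⟨⟨i, hi⟩, rfl⟩⟩
  exact ⟨RelIso.symm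
    { toEquiv := Equiv.ofBijective _ hbij
      map_rel_iff' := fun {i j} => by
        simp [hu.adj_iff i i.isLt j j.isLt, SimpleGraph.pathGraph_adj] }⟩

end IsPathLabeling

theorem isPathLabeling_pair {a b : V} (hab : G.Adj a b) :
    IsPathLabeling G {a, b} 2 (fun i => if i = 0 then a else b) where
  bijOn := by
    refine ⟨fun i hi => ?_, fun i hi j hj hij => ?_, fun z hz => ?_⟩
    · by_cases i = 0 <;> simp [*]
    · simp only [Set.mem_Iio] at hi hj
      by_contra hne
      obtain ⟨rfl, rfl⟩ | ⟨rfl, rfl⟩ : (i = 0 ∧ j = 1) ∨ (i = 1 ∧ j = 0) := by omega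
      · exact hab.ne hij
      · exact hab.ne hij.symm
    · rcases hz with rfl | rfl
      · exact ⟨0, by simp⟩
      · exact ⟨1, by simp⟩
  adj_iff i hi j hj := by
    interval_cases i <;> interval_cases j <;> simp [hab, hab.symm]

theorem IsPathLabeling.bijOn_attach_ends (hu : IsPathLabeling G T n u) {c d : V} (hc : c ∉ T)
    (hd : d ∉ T) (hcd : c ≠ d) :
    Set.BijOn (fun i => if i = 0 then c else if i = n + 1 then d else u (i - 1))
      (Set.Iio (n + 2)) (insert c (insert d T)) := by
  have hcu : ∀ i < n, u i ≠ c := fun i hi h => hc (h ▸ hu.mem hi)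
  have hdu : ∀ i < n, u i ≠ d := fun i hi h => hd (h ▸ hu.mem hi)
  refine ⟨fun i hi => ?_, fun i hi j hj hij => ?_, fun z hz => ?_⟩
  · simp only [Set.mem_Iio] at hi
    dsimp only
    split_ifs
    · exact Set.mem_insert c _
    · exact Set.mem_insert_of_mem c (Set.mem_insert d T)
    · exact Set.mem_insert_of_mem c (Set.mem_insert_of_mem d (hu.mem (by omega)))
  · simp only [Set.mem_Iio] at hi hj
    dsimp only at hij
    split_ifs at hij <;>
      first
      | omega
      | exact absurd hij hcd
      | exact absurd hij.symm hcd
      | exact absurd hij.symm (hcu _ (by omega))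
      | exact absurd hij (hcu _ (by omega))
      | exact absurd hij.symm (hdu _ (by omega))
      | exact absurd hij (hdu _ (by omega))
      | have := (hu.eq_iff (by omega) (by omega)).1 hij; omega
  · rcases hz with rfl | rfl | hz
    · exact ⟨0, by simp⟩
    · exact ⟨n + 1, by simp, by simp⟩
    · obtain ⟨i, hi, rfl⟩ := hu.exists_eq hz
      exact ⟨i + 1, by simp only [Set.mem_Iio]; omega, by
        dsimp only; rw [if_neg (by omega), if_neg (by omega), Nat.add_sub_cancel]⟩

theorem IsPathLabeling.attach_ends (hu : IsPathLabeling G T n u) (hn : 1 ≤ n) {c d : V}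
    (hc : c ∉ T) (hd : d ∉ T) (hcd : c ≠ d) (hcu : ∀ i < n, G.Adj c (u i) ↔ i = 0)
    (hdu : ∀ i < n, G.Adj d (u i) ↔ i + 1 = n) (hncd : ¬ G.Adj c d) :
    IsPathLabeling G (insert c (insert d T)) (n + 2)
      (fun i => if i = 0 then c else if i = n + 1 then d else u (i - 1)) where
  bijOn := hu.bijOn_attach_ends hc hd hcd
  adj_iff i hi j hj := by
    split_ifs
    all_goals first
      | (simp only [SimpleGraph.irrefl, false_iff]; omega)
      | (simp only [hncd, false_iff]; omega)
      | (simp only [G.adj_comm d c, hncd, false_iff]; omega)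
      | (rw [hcu _ (by omega)]; omega)
      | (rw [G.adj_comm, hcu _ (by omega)]; omega)
      | (rw [hdu _ (by omega)]; omega)
      | (rw [G.adj_comm, hdu _ (by omega)]; omega)
      | (rw [hu.adj_iff _ (by omega) _ (by omega)]; omega)

end PathLabeling

section Extension

/-- One step of the corner ranking procedure, read backwards. -/
structure TwoCornerExtension (G : SimpleGraph V) (T S : Set V) (n : ℕ) (u : ℕ → V)
    (c d : V) : Prop where
  path : IsPathLabeling G T n u
  c_notMem : c ∉ T
  d_notMem : d ∉ T
  ne : c ≠ d
  eq_insert : S = insert c (insert d T)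
  strictCorner_iff : ∀ v, StrictCorner G S v ↔ v = c ∨ v = d

/-- `x` witnesses `N[u 0] ⊄ N[u 1]`. -/
def ProtectsStart (G : SimpleGraph V) (u : ℕ → V) (x : V) : Prop :=
  G.Adj x (u 0) ∧ ¬ G.Adj x (u 1)

theorem protectsStart_reverse_reverse {n : ℕ} {u : ℕ → V} {x : V} (hn : 2 ≤ n) :
    ProtectsStart G (fun i => u (n - 1 - (n - 1 - i))) x ↔ ProtectsStart G u x := by
  rw [ProtectsStart, ProtectsStart, show n - 1 - (n - 1 - 0) = 0 by omega,
    show n - 1 - (n - 1 - 1) = 1 by omega]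

namespace TwoCornerExtension

variable {T S : Set V} {n : ℕ} {u : ℕ → V} {c d : V}

section

variable (h : TwoCornerExtension G T S n u c d)
include h

theorem swap : TwoCornerExtension G T S n u d c where
  path := h.path
  c_notMem := h.d_notMem
  d_notMem := h.c_notMem
  ne := h.ne.symm
  eq_insert := h.eq_insert.trans (Set.insert_comm c d T)
  strictCorner_iff v := (h.strictCorner_iff v).trans or_comm

theorem reverse : TwoCornerExtension G T S n (fun i => u (n - 1 - i)) c d :=
  { h with path := h.path.reverse }

theorem c_mem : c ∈ S := h.eq_insert ▸ Set.mem_insert c _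

theorem u_mem {i : ℕ} (hi : i < n) : u i ∈ S :=
  h.eq_insert ▸ Set.mem_insert_of_mem c (Set.mem_insert_of_mem d (h.path.mem hi))

theorem u_ne_c {i : ℕ} (hi : i < n) : u i ≠ c := fun e => h.c_notMem (e ▸ h.path.mem hi)

theorem mem_cases {z : V} (hz : z ∈ S) : z = c ∨ z = d ∨ ∃ i < n, u i = z := by
  rw [h.eq_insert] at hz
  rcases hz with rfl | rfl | hz
  · exact Or.inl rfl
  · exact Or.inr (Or.inl rfl)
  · exact Or.inr (Or.inr (h.path.exists_eq hz))

theorem u_mem_closedNbhd_iff {i j : ℕ} (hi : i < n) (hj : j < n) :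
    u i ∈ closedNbhd G S (u j) ↔ i = j ∨ i + 1 = j ∨ j + 1 = i := by
  rw [mem_closedNbhd, h.path.eq_iff hi hj, h.path.adj_iff i hi j hj]
  exact and_iff_right (h.u_mem hi)

theorem not_strictCorner_u {i : ℕ} (hi : i < n) : ¬ StrictCorner G S (u i) := fun hc =>
  ((h.strictCorner_iff _).1 hc).elim (h.u_ne_c hi) (h.swap.u_ne_c hi)

theorem strictCorner_c : StrictCorner G S c := (h.strictCorner_iff c).2 (Or.inl rfl)

theorem not_closedNbhd_subset_of_adj_last (hn : 3 ≤ n) {x : V} (hx : G.Adj x (u (n - 1))) :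
    ¬ closedNbhd G S x ⊆ closedNbhd G S (u 0) := fun hsub => by
  have := (h.u_mem_closedNbhd_iff (i := n - 1) (by omega) (by omega)).1
    (hsub (mem_closedNbhd_of_adj (h.u_mem (by omega)) hx.symm))
  omega

theorem adj_iff_eq_zero (hsub : closedNbhd G S c ⊆ closedNbhd G S (u 0))
    (h1 : ¬ G.Adj c (u 1)) {i : ℕ} (hi : i < n) : G.Adj c (u i) ↔ i = 0 := by
  refine ⟨fun hci => ?_, ?_⟩
  · have := (h.u_mem_closedNbhd_iff hi (by omega)).1
      (hsub (mem_closedNbhd_of_adj (h.u_mem hi) hci.symm))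
    by_contra hi0
    obtain rfl : i = 1 := by omega
    exact h1 hci
  · rintro rfl
    exact adj_of_mem_closedNbhd (hsub (self_mem_closedNbhd h.c_mem)) (h.u_ne_c hi).symm

theorem exists_pathLabeling_of_closedNbhd_subset (hn : 2 ≤ n)
    (hc : closedNbhd G S c ⊆ closedNbhd G S (u 0)) (hc1 : ¬ G.Adj c (u 1))
    (hd : closedNbhd G S d ⊆ closedNbhd G S (u (n - 1))) (hd1 : ¬ G.Adj d (u (n - 2))) :
    ∃ w, IsPathLabeling G S (n + 2) w := by
  have hdu : ∀ i < n, G.Adj d (u i) ↔ i + 1 = n := fun i hi => by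
    have := h.swap.reverse.adj_iff_eq_zero hd hd1 (i := n - 1 - i) (by omega)
    rw [Nat.sub_sub_self (by omega)] at this
    exact this.trans (by omega)
  have hncd : ¬ G.Adj c d := fun hcd => by
    have := (hdu 0 (by omega)).1 (adj_of_closedNbhd_subset hc h.swap.c_mem
      (h.swap.u_ne_c (by omega)).symm hcd).symm
    omega
  rw [h.eq_insert]
  exact ⟨_, h.path.attach_ends (by omega) h.c_notMem h.d_notMem h.ne
    (fun i hi => h.adj_iff_eq_zero hc hc1 hi) hdu hncd⟩

theorem closedNbhd_subset_of_protectsStart (hc : ProtectsStart G u c) :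
    closedNbhd G S c ⊆ closedNbhd G S (u 0) ∨
      G.Adj c d ∧ closedNbhd G S c ⊂ closedNbhd G S d := by
  obtain ⟨-, w, hw, hwc, hss⟩ := h.strictCorner_c
  rcases h.mem_cases hw with rfl | rfl | ⟨j, hj, rfl⟩
  · exact absurd rfl hwc
  · exact Or.inr ⟨adj_of_mem_closedNbhd (hss.1 (self_mem_closedNbhd h.c_mem)) h.ne, hss⟩
  · have hcj : G.Adj c (u j) :=
      adj_of_mem_closedNbhd (hss.1 (self_mem_closedNbhd h.c_mem)) hwc.symm
    have := (h.u_mem_closedNbhd_iff (i := 0) (by omega) hj).1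
      (hss.1 (mem_closedNbhd_of_adj (h.u_mem (by omega)) hc.1.symm))
    obtain rfl : j = 0 := by
      by_contra hj0
      obtain rfl : j = 1 := by omega
      exact hc.2 hcj
    exact Or.inl hss.1

theorem protectsStart_or (hn : 3 ≤ n) : ProtectsStart G u c ∨ ProtectsStart G u d := by
  by_contra hne
  simp only [ProtectsStart, not_or, not_and, not_not] at hne
  -- then `u 1` strictly corners `u 0`, strictly because of `u 2`
  refine h.not_strictCorner_u (i := 0) (by omega) (strictCorner_of_subset (h.u_mem (by omega))
    (h.u_mem (i := 1) (by omega)) (fun x hx => ?_)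
    ((h.u_mem_closedNbhd_iff (i := 2) (by omega) (by omega)).2 (by omega))
    (by rw [h.u_mem_closedNbhd_iff (by omega) (by omega)]; omega))
  rcases h.mem_cases hx.1 with rfl | rfl | ⟨i, hi, rfl⟩
  · exact mem_closedNbhd_of_adj hx.1
      (hne.1 (adj_of_mem_closedNbhd hx (h.u_ne_c (by omega)).symm))
  · exact mem_closedNbhd_of_adj hx.1
      (hne.2 (adj_of_mem_closedNbhd hx (h.swap.u_ne_c (by omega)).symm))
  · rw [h.u_mem_closedNbhd_iff hi (by omega)] at hx ⊢
    omega

theorem not_adj_one (hn : 3 ≤ n) (hcd : G.Adj c d) (hd0 : G.Adj d (u 0))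
    (hdl : G.Adj d (u (n - 1))) : ¬ G.Adj d (u 1) := fun hd1 => by
  -- then `d` strictly corners `u 0`, strictly because of `u (n - 1)`
  refine h.not_strictCorner_u (i := 0) (by omega) (strictCorner_of_subset (h.u_mem (by omega))
    h.swap.c_mem (fun x hx => ?_) (mem_closedNbhd_of_adj (h.u_mem (by omega)) hdl.symm)
    (by rw [h.u_mem_closedNbhd_iff (by omega) (by omega)]; omega))
  rcases h.mem_cases hx.1 with rfl | rfl | ⟨i, hi, rfl⟩
  · exact mem_closedNbhd_of_adj hx.1 hcd
  · exact self_mem_closedNbhd hx.1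
  · rw [h.u_mem_closedNbhd_iff hi (by omega)] at hx
    obtain rfl | rfl : i = 0 ∨ i = 1 := by omega
    · exact mem_closedNbhd_of_adj (h.u_mem hi) hd0.symm
    · exact mem_closedNbhd_of_adj (h.u_mem hi) hd1.symm

theorem not_protectsStart_reverse (hn : 3 ≤ n) (hc : ProtectsStart G u c) :
    ¬ ProtectsStart G (fun i => u (n - 1 - i)) c := fun hc' => by
  rcases h.closedNbhd_subset_of_protectsStart hc with hsub | ⟨hcd, hss⟩
  · exact h.not_closedNbhd_subset_of_adj_last hn hc'.1 hsub
  · have hd0 := adj_of_closedNbhd_subset hss.1 (h.u_mem (by omega)) (h.swap.u_ne_c (by omega))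
      hc.1
    have hdl := adj_of_closedNbhd_subset hss.1 (h.u_mem (by omega)) (h.swap.u_ne_c (by omega))
      hc'.1
    rcases h.swap.closedNbhd_subset_of_protectsStart ⟨hd0, h.not_adj_one hn hcd hd0 hdl⟩ with
      hsub | ⟨-, hss'⟩
    · exact h.not_closedNbhd_subset_of_adj_last hn hdl hsub
    · exact hss.asymm hss'

theorem closedNbhd_subset_of_protectsStart_reverse (hn : 3 ≤ n) (hc : ProtectsStart G u c)
    (hd : ProtectsStart G (fun i => u (n - 1 - i)) d) :
    closedNbhd G S c ⊆ closedNbhd G S (u 0) := by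
  refine (h.closedNbhd_subset_of_protectsStart hc).resolve_right fun ⟨_, hss⟩ => ?_
  have hd0 :=
    adj_of_closedNbhd_subset hss.1 (h.u_mem (by omega)) (h.swap.u_ne_c (by omega)) hc.1
  rcases h.swap.reverse.closedNbhd_subset_of_protectsStart hd with hsub | ⟨-, hss'⟩
  · exact h.swap.reverse.not_closedNbhd_subset_of_adj_last hn (by simpa using hd0) hsub
  · exact hss.asymm hss'

theorem exists_pathLabeling_of_protectsStart (hn : 3 ≤ n) (hc : ProtectsStart G u c)
    (hd : ProtectsStart G (fun i => u (n - 1 - i)) d) : ∃ w, IsPathLabeling G S (n + 2) w :=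
  h.exists_pathLabeling_of_closedNbhd_subset (by omega)
    (h.closedNbhd_subset_of_protectsStart_reverse hn hc hd) hc.2
    (h.swap.reverse.closedNbhd_subset_of_protectsStart_reverse hn hd
      ((protectsStart_reverse_reverse (by omega)).2 hc)) hd.2

theorem exists_pathLabeling_of_three_le (hn : 3 ≤ n) : ∃ w, IsPathLabeling G S (n + 2) w := by
  rcases h.protectsStart_or hn with hc | hd <;>
    rcases h.reverse.protectsStart_or hn with hc' | hd'
  · exact (h.not_protectsStart_reverse hn hc hc').elim
  · exact h.exists_pathLabeling_of_protectsStart hn hc hd'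
  · exact h.swap.exists_pathLabeling_of_protectsStart hn hd hc'
  · exact (h.swap.not_protectsStart_reverse hn hd hd').elim

end

section

variable (h : TwoCornerExtension G T S 2 u c d) (hdom : ∀ i < 2, ¬ Dominates G (u i) S)
include h hdom

theorem not_adj_d_of_adj_c {i : ℕ} (hi : i < 2) (hc : G.Adj c (u i)) : ¬ G.Adj d (u i) :=
  fun hd => hdom i hi fun z hz => by
    rcases h.mem_cases hz with rfl | rfl | ⟨j, hj, rfl⟩
    · exact Or.inr hc.symm
    · exact Or.inr hd.symm
    · rw [or_iff_not_imp_left, h.path.eq_iff hj hi, h.path.adj_iff i hi j hj]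
      omega

theorem exists_closedNbhd_subset_of_two :
    ∃ i < 2, closedNbhd G S c ⊆ closedNbhd G S (u i) := by
  obtain ⟨-, w, hw, hwc, hss⟩ := h.strictCorner_c
  rcases h.mem_cases hw with rfl | rfl | ⟨i, hi, rfl⟩
  · exact absurd rfl hwc
  · have hcd : G.Adj c w := adj_of_mem_closedNbhd (hss.1 (self_mem_closedNbhd h.c_mem)) h.ne
    obtain ⟨-, w', hw', hw'd, hss'⟩ := h.swap.strictCorner_c
    rcases h.mem_cases hw' with rfl | rfl | ⟨j, hj, rfl⟩
    · exact (hss.asymm hss').elim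
    · exact absurd rfl hw'd
    · have hcj := (adj_of_closedNbhd_subset hss'.1 h.c_mem (h.u_ne_c hj).symm hcd.symm).symm
      exact (h.not_adj_d_of_adj_c hdom hj hcj
        (adj_of_closedNbhd_subset hss.1 (h.u_mem hj) (h.swap.u_ne_c hj) hcj)).elim
  · exact ⟨i, hi, hss.1⟩

theorem exists_pathLabeling_of_two : ∃ w, IsPathLabeling G S 4 w := by
  obtain ⟨i, hi, hci⟩ := h.exists_closedNbhd_subset_of_two hdom
  obtain ⟨j, hj, hdj⟩ := h.swap.exists_closedNbhd_subset_of_two hdom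
  have hca := adj_of_mem_closedNbhd (hci (self_mem_closedNbhd h.c_mem)) (h.u_ne_c hi).symm
  have hda :=
    adj_of_mem_closedNbhd (hdj (self_mem_closedNbhd h.swap.c_mem)) (h.swap.u_ne_c hj).symm
  have hij : i ≠ j := fun e => h.not_adj_d_of_adj_c hdom hi hca (e ▸ hda)
  obtain ⟨rfl, rfl⟩ | ⟨rfl, rfl⟩ : (i = 0 ∧ j = 1) ∨ (i = 1 ∧ j = 0) := by omega
  · exact h.exists_pathLabeling_of_closedNbhd_subset le_rfl hci
      (fun hc1 => h.not_adj_d_of_adj_c hdom hj hc1 hda) hdj (h.not_adj_d_of_adj_c hdom hi hca)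
  · exact h.reverse.exists_pathLabeling_of_closedNbhd_subset le_rfl hci
      (fun hc1 => h.not_adj_d_of_adj_c hdom hj hc1 hda) hdj (h.not_adj_d_of_adj_c hdom hi hca)

end

theorem exists_pathLabeling (h : TwoCornerExtension G T S n u c d) (hn : 2 ≤ n)
    (hdom : n = 2 → ∀ i < n, ¬ Dominates G (u i) S) : ∃ w, IsPathLabeling G S (n + 2) w := by
  obtain rfl | hn3 : n = 2 ∨ 3 ≤ n := by omega
  · exact h.exists_pathLabeling_of_two (hdom rfl)
  · exact h.exists_pathLabeling_of_three_le hn3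

end TwoCornerExtension

end Extension

theorem twoCornerExtension_stage {k n : ℕ} {u : ℕ → V} {c d v₀ : V} (hk : 1 ≤ k)
    (hv₀ : (k : ℕ∞) < cornerRank G v₀) (hcd : c ≠ d)
    (hX : {v | cornerRank G v = k} = {c, d}) (hu : IsPathLabeling G (stage G (k + 1)) n u) :
    TwoCornerExtension G (stage G (k + 1)) (stage G k) n u c d := by
  have hrank : ∀ v, cornerRank G v = k ↔ v = c ∨ v = d := fun v => by
    simpa only [Set.mem_ofPred_eq, Set.mem_insert_iff, Set.mem_singleton_iff] using
      Set.ext_iff.1 hX v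
  have hst1 := stage_eq_setOf_le (k := k + 1) (by omega) (v₀ := v₀)
    ((ENat.add_one_le_iff (ENat.natCast_ne_top k)).2 hv₀)
  have hnotMem : ∀ v, cornerRank G v = k → v ∉ stage G (k + 1) := fun v hv hmem => by
    rw [hst1, Set.mem_ofPred_eq, hv, Nat.cast_le] at hmem
    omega
  refine ⟨hu, hnotMem c ((hrank c).2 (Or.inl rfl)), hnotMem d ((hrank d).2 (Or.inr rfl)), hcd,
    ?_, fun v => (strictCorner_stage_iff hk hv₀ v).trans (hrank v)⟩
  ext v
  rw [stage_eq_setOf_le hk hv₀.le, hst1, Set.mem_insert_iff, Set.mem_insert_iff, ← or_assoc,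
    ← hrank, Set.mem_ofPred_eq, Set.mem_ofPred_eq, le_iff_eq_or_lt, Nat.cast_add_one,
    ENat.add_one_le_iff (ENat.natCast_ne_top k), eq_comm]

theorem exists_pathLabeling_stage_top {α : ℕ} (hα : 1 ≤ α)
    (hle : ∀ v, cornerRank G v ≤ α) (hcard : {v | cornerRank G v = α}.ncard = 2) :
    ∃ u, IsPathLabeling G (stage G α) 2 u := by
  obtain ⟨a, b, hab, hX⟩ := Set.ncard_eq_two.1 hcard
  have ha : cornerRank G a = α := (Set.ext_iff.1 hX a).2 (Set.mem_insert a _)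
  have hst : stage G α = {a, b} := by
    rw [stage_eq_setOf_le hα ha.ge, ← hX]
    exact Set.ext fun v => ⟨fun hv => le_antisymm (hle v) hv, fun hv => hv.ge⟩
  exact ⟨_, hst ▸ isPathLabeling_pair (adj_of_stage_eq_pair hab hst ha)⟩

theorem exists_pathLabeling_univ {α : ℕ} (hα : 2 ≤ α) (hrank : graphRank G = α)
    (hcard : ∀ k, 1 ≤ k → k ≤ α → {v | cornerRank G v = k}.ncard = 2)
    (htp0 : ∀ v, cornerRank G v = α → ¬ Dominates G v (stage G (α - 1))) :
    ∃ u, IsPathLabeling G Set.univ (2 * α) u := by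
  have hle : ∀ v, cornerRank G v ≤ α := fun v => hrank ▸ le_iSup (cornerRank G) v
  obtain ⟨v₀, hv₀⟩ : ∃ v, cornerRank G v = α :=
    Set.nonempty_of_ncard_ne_zero (s := {v | cornerRank G v = α})
      (by rw [hcard α (by omega) le_rfl]; norm_num)
  have hstage : ∀ j < α, ∃ u, IsPathLabeling G (stage G (α - j)) (2 * (j + 1)) u := by
    intro j
    induction j with
    | zero =>
      exact fun _ => exists_pathLabeling_stage_top (by omega) hle (hcard α (by omega) le_rfl)
    | succ j ih =>
      intro hj
      obtain ⟨u, hu⟩ := ih (by omega)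
      obtain ⟨c, d, hcd, hX⟩ := Set.ncard_eq_two.1 (hcard (α - (j + 1)) (by omega) (by omega))
      rw [show α - j = α - (j + 1) + 1 by omega] at hu
      have h := twoCornerExtension_stage (by omega)
        (by rw [hv₀]; exact_mod_cast (by omega : α - (j + 1) < α)) hcd hX hu
      obtain ⟨w, hw⟩ := h.exists_pathLabeling (by omega) fun hn i hi => by
        obtain rfl : j = 0 := by omega
        have hui : cornerRank G (u i) = α := le_antisymm (hle _) (by
          have := hu.mem hi
          rwa [show α - (0 + 1) + 1 = α by omega, stage_eq_setOf_le (by omega) hv₀.ge] at this)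
        simpa using htp0 (u i) hui
      exact ⟨w, by rwa [show 2 * (j + 1 + 1) = 2 * (j + 1) + 2 by ring]⟩
  obtain ⟨u, hu⟩ := hstage (α - 1) (by omega)
  rw [show α - (α - 1) = 1 by omega, stage_one, show α - 1 + 1 = α by omega] at hu
  exact ⟨u, hu⟩

end CopsRobbers

/-- for `α ≥ 2`, the vector `(2, …, 2)` of length `α` is uniquely 0-realized
by the path on `2α` vertices. -/
theorem CopsRobbers.twos_uniquely_zero_realized_by_path (α : ℕ) (hα : 2 ≤ α) :
    CopsRobbers.RRealizes (SimpleGraph.pathGraph (2 * α)) 0 (List.replicate α 2) ∧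
    ∀ (W : Type) (_ : Fintype W) (G : SimpleGraph W),
      CopsRobbers.RRealizes G 0 (List.replicate α 2) →
      Nonempty (G ≃g SimpleGraph.pathGraph (2 * α)) := by
  refine ⟨CopsRobbers.rRealizes_pathGraph hα, fun W _ G hG => ?_⟩
  obtain ⟨hreal, hnot⟩ := CopsRobbers.rRealizes_zero_iff.1 hG
  obtain ⟨-, hrank, hcard⟩ := CopsRobbers.realizes_replicate_iff.1 hreal
  rw [CopsRobbers.tp1_iff hα hrank, not_exists] at hnot
  obtain ⟨u, hu⟩ := CopsRobbers.exists_pathLabeling_univ hα hrank hcard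
    fun v hv => not_and.1 (hnot v) hv
  exact hu.nonempty_iso
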